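/- For a linear fixed-point iteration with error operator P having 1 ∉ spec(P), the accelerated value computed only on a subset of coordinates via the restricted error operator still gives the exact interface solution: if P has block-antidiagonal structure P = [[0, P₁₂],[P₂₁, 0]], then the restricted iteration on the first block with operator P₁₂P₂₁ converges (via Aitken acceleration) to the first block of the global fixed point, provided 1 ∉ spec(P₁₂P₂₁). -/
import Mathlib


open Matrix

/-- For a block-antidiagonal error operator `P = [[0,P₁₂],[P₂₁,0]]`, the
restricted iteration on the first block uses operator `P₁₂P₂₁`, and if
`1 ∉ spec(P₁₂P₂₁)` the Aitken-accelerated value on the first block is exactly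
the first block of the global fixed point:
`z₁^∞ = (I - P₁₂P₂₁)⁻¹ (b₁ + P₁₂ b₂)`. -/
theorem restricted_aitken_block (n₁ n₂ : ℕ)
    (P₁₂ : Matrix (Fin n₁) (Fin n₂) ℂ) (P₂₁ : Matrix (Fin n₂) (Fin n₁) ℂ)
    (b₁ : Fin n₁ → ℂ) (b₂ : Fin n₂ → ℂ)
    (z₁ : ℕ → Fin n₁ → ℂ) (z₂ : ℕ → Fin n₂ → ℂ)
    (h₁ : ∀ k, z₁ (k + 1) = P₁₂.mulVec (z₂ k) + b₁)
    (h₂ : ∀ k, z₂ (k + 1) = P₂₁.mulVec (z₁ k) + b₂)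
    (z1Lim : Fin n₁ → ℂ) (z2Lim : Fin n₂ → ℂ)
    (hfix₁ : P₁₂.mulVec z2Lim + b₁ = z1Lim)
    (hfix₂ : P₂₁.mulVec z1Lim + b₂ = z2Lim)
    (hspec : (1 : ℂ) ∉ spectrum ℂ (P₁₂ * P₂₁)) :
    (∀ k : ℕ, z₁ (k + 2) = (P₁₂ * P₂₁).mulVec (z₁ k) + (b₁ + P₁₂.mulVec b₂)) ∧
      z1Lim = (1 - P₁₂ * P₂₁)⁻¹.mulVec (b₁ + P₁₂.mulVec b₂) := by
  have hunit : IsUnit (1 - P₁₂ * P₂₁) := by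
    have := spectrum.notMem_iff.mp hspec
    simpa [Algebra.algebraMap_eq_smul_one] using this
  constructor
  · intro k
    rw [h₁ (k+1), h₂ k, Matrix.mulVec_add, Matrix.mulVec_mulVec]
    abel
  · have key : (1 - P₁₂ * P₂₁).mulVec z1Lim = b₁ + P₁₂.mulVec b₂ := by
    -- z1Lim = P₁₂P₂₁ z1Lim + b₁ + P₁₂ b₂
      have h : P₁₂.mulVec (P₂₁.mulVec z1Lim + b₂) + b₁ = z1Lim := by
        rw [hfix₂]; exact hfix₁
      rw [Matrix.mulVec_add, Matrix.mulVec_mulVec] at h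
      rw [Matrix.sub_mulVec, Matrix.one_mulVec, sub_eq_iff_eq_add']
      conv_lhs => rw [← h]
      abel
    have hinv : (1 - P₁₂ * P₂₁)⁻¹ * (1 - P₁₂ * P₂₁) = 1 :=
      Matrix.nonsing_inv_mul _ ((Matrix.isUnit_iff_isUnit_det _).mp hunit)
    calc z1Lim = (1 : Matrix (Fin n₁) (Fin n₁) ℂ).mulVec z1Lim := by rw [Matrix.one_mulVec]
      _ = ((1 - P₁₂ * P₂₁)⁻¹ * (1 - P₁₂ * P₂₁)).mulVec z1Lim := by rw [hinv]
      _ = (1 - P₁₂ * P₂₁)⁻¹.mulVec ((1 - P₁₂ * P₂₁).mulVec z1Lim) := by rw [Matrix.mulVec_mulVec]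
      _ = _ := by rw [key]
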